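/- arXiv:2605.28207 — 6 statements merged into one kernel-verified Lean document; each statement's English description precedes it below -/
import Mathlib

section
/- Let K be an E-by-E real symmetric positive semidefinite matrix, λ > 0, and F̃(S) = log det(I + λ⁻¹ K_S). Then F̃ is submodular: for all subsets S ⊆ T ⊆ {1,...,E} and every e ∉ T, F̃(S ∪ {e}) − F̃(S) ≥ F̃(T ∪ {e}) − F̃(T). -/
/-!
Put `N = 1 + λ⁻¹ K`, which is positive definite. By the Schur complement formula for
`N_{U ∪ {e}}`, the marginal gain `F̃(U ∪ {e}) − F̃(U)` is `log (N e e − bᵀ N_U⁻¹ b)` with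
`b = (N i e)_{i ∈ U}`. The quadratic form `bᵀ A⁻¹ b = max_v (2 bᵀ v − vᵀ A v)` of a positive
definite `A` can only grow when the index set grows, since a maximiser for a principal submatrix
extends by zero. Hence the marginal gain decreases as `U` grows.
-/

open Matrix Finset

/-- Principal submatrix of `K` indexed by a finite set `S`. -/
noncomputable def subK {E : ℕ} (K : Matrix (Fin E) (Fin E) ℝ) (S : Finset (Fin E)) :
    Matrix {x // x ∈ S} {x // x ∈ S} ℝ :=
  K.submatrix (fun i => i.1) (fun j => j.1)

/-- `F̃(S) = log det (I + λ⁻¹ K_S)` (equal to `0` when `S = ∅`). -/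
noncomputable def Ftil {E : ℕ} (K : Matrix (Fin E) (Fin E) ℝ) (lam : ℝ)
    (S : Finset (Fin E)) : ℝ :=
  Real.log (1 + lam⁻¹ • subK K S).det

namespace Matrix

variable {ι κ : Type*} [Fintype ι] [Fintype κ] [DecidableEq ι] [DecidableEq κ]

theorem PosDef.two_mul_dotProduct_sub_le_dotProduct_inv_mulVec {A : Matrix ι ι ℝ}
    (hA : A.PosDef) (b v : ι → ℝ) :
    2 * (b ⬝ᵥ v) - v ⬝ᵥ (A *ᵥ v) ≤ b ⬝ᵥ (A⁻¹ *ᵥ b) := by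
  set u := A⁻¹ *ᵥ b
  have hAu : A *ᵥ u = b := by
    rw [mulVec_mulVec, mul_nonsing_inv _ ((isUnit_iff_isUnit_det A).mp hA.isUnit), one_mulVec]
  have hsymm : ∀ x y : ι → ℝ, x ⬝ᵥ (A *ᵥ y) = y ⬝ᵥ (A *ᵥ x) := by
    intro x y
    rw [dotProduct_mulVec, ← mulVec_transpose, dotProduct_comm,
      ← conjTranspose_eq_transpose_of_trivial, hA.isHermitian.eq]
  -- complete the square around `A⁻¹ b`
  have hnonneg := hA.posSemidef.dotProduct_mulVec_nonneg (v - u)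
  rw [star_trivial, sub_dotProduct, mulVec_sub, dotProduct_sub, dotProduct_sub, hAu,
    hsymm u v, hAu, dotProduct_comm v b, dotProduct_comm u b] at hnonneg
  linarith

theorem PosDef.dotProduct_submatrix_inv_mulVec_le {A : Matrix ι ι ℝ} (hA : A.PosDef)
    {f : κ → ι} (hf : Function.Injective f) (b : ι → ℝ) :
    (b ∘ f) ⬝ᵥ ((A.submatrix f f)⁻¹ *ᵥ (b ∘ f)) ≤ b ⬝ᵥ (A⁻¹ *ᵥ b) := by
  -- `P` extends vectors by zero along `f`
  set P : Matrix ι κ ℝ := (1 : Matrix ι ι ℝ).submatrix id f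
  have hPA : A.submatrix f f = Pᵀ * A * P := by
    ext i j; simp [P, Matrix.mul_apply, Matrix.one_apply]
  have hbP : b ᵥ* P = b ∘ f := by
    ext j; simp [P, vecMul, dotProduct, Matrix.one_apply]
  set v := (A.submatrix f f)⁻¹ *ᵥ (b ∘ f)
  have hv : A.submatrix f f *ᵥ v = b ∘ f := by
    rw [mulVec_mulVec, mul_nonsing_inv _ ((isUnit_iff_isUnit_det _).mp (hA.submatrix hf).isUnit),
      one_mulVec]
  have hmax := hA.two_mul_dotProduct_sub_le_dotProduct_inv_mulVec b (P *ᵥ v)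
  have hlin : b ⬝ᵥ (P *ᵥ v) = (b ∘ f) ⬝ᵥ v := by rw [dotProduct_mulVec, hbP]
  have hquad : (P *ᵥ v) ⬝ᵥ (A *ᵥ (P *ᵥ v)) = (b ∘ f) ⬝ᵥ v := by
    rw [dotProduct_comm _ v, ← hv, hPA, ← mulVec_mulVec, ← mulVec_mulVec, dotProduct_mulVec v,
      vecMul_transpose]
  rw [hlin, hquad] at hmax
  linarith

section Schur

variable {ι R : Type*} [DecidableEq ι] [CommRing R]

noncomputable def schurComplInsert (N : Matrix ι ι R) (U : Finset ι) (e : ι) : R :=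
  N e e - (fun i : U => N e i) ⬝ᵥ ((N.submatrix (↑) (↑) : Matrix U U R)⁻¹ *ᵥ fun i : U => N i e)

theorem det_submatrix_insert (N : Matrix ι ι R) {U : Finset ι} {e : ι} (he : e ∉ U)
    (hU : IsUnit (N.submatrix (↑) (↑) : Matrix U U R).det) :
    (N.submatrix (↑) (↑) : Matrix ↥(insert e U) ↥(insert e U) R).det =
      (N.submatrix (↑) (↑) : Matrix U U R).det * schurComplInsert N U e := by
  let σ : U ⊕ PUnit ≃ ↥(insert e U) :=
    (Equiv.Set.insert (s := (U : Set ι)) he).symm.trans (Equiv.setCongr (coe_insert e U).symm)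
  have hblock : (N.submatrix (↑) (↑) : Matrix ↥(insert e U) ↥(insert e U) R).submatrix σ σ =
      fromBlocks (N.submatrix (↑) (↑) : Matrix U U R) (of fun i _ => N i e) (of fun _ j => N e j)
        (of fun _ _ => N e e) := by
    ext (i | i) (j | j) <;> rfl
  let := invertibleOfIsUnitDet _ hU
  rw [← det_submatrix_equiv_self σ, hblock, det_fromBlocks₁₁, invOf_eq_nonsing_inv,
    det_unique (n := PUnit)]
  congr 1
  simp only [schurComplInsert, sub_apply, of_apply, Matrix.mul_apply, dotProduct, mulVec,
    Finset.mul_sum, Finset.sum_mul, mul_assoc]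
  rw [Finset.sum_comm]

end Schur

section Real

variable {ι : Type*} [DecidableEq ι] {N : Matrix ι ι ℝ}

theorem PosDef.det_submatrix_finset_pos (hN : N.PosDef) (U : Finset ι) :
    0 < (N.submatrix (↑) (↑) : Matrix U U ℝ).det :=
  (hN.submatrix Subtype.val_injective).det_pos

theorem PosDef.schurComplInsert_pos (hN : N.PosDef) {U : Finset ι} {e : ι} (he : e ∉ U) :
    0 < schurComplInsert N U e := by
  have hU := hN.det_submatrix_finset_pos U
  have hins := hN.det_submatrix_finset_pos (insert e U)
  rw [det_submatrix_insert N he hU.ne'.isUnit] at hins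
  exact pos_of_mul_pos_right hins hU.le

theorem PosDef.schurComplInsert_le_of_subset (hN : N.PosDef) {S T : Finset ι} (hST : S ⊆ T)
    (e : ι) : schurComplInsert N T e ≤ schurComplInsert N S e := by
  have hrow : ∀ U : Finset ι, (fun i : U => N e i) = fun i : U => N i e := fun U =>
    funext fun i => by simpa using (hN.isHermitian.apply e i).symm
  have hq := (hN.submatrix Subtype.val_injective).dotProduct_submatrix_inv_mulVec_le
    (f := fun i : S => (⟨i, hST i.2⟩ : T)) (fun _ _ h => Subtype.ext (Subtype.mk.inj h))
    (fun i => N i e)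
  simp only [schurComplInsert, hrow]
  exact sub_le_sub_left hq _

theorem PosDef.log_det_submatrix_insert_sub (hN : N.PosDef) {U : Finset ι} {e : ι} (he : e ∉ U) :
    Real.log (N.submatrix (↑) (↑) : Matrix ↥(insert e U) ↥(insert e U) ℝ).det -
      Real.log (N.submatrix (↑) (↑) : Matrix U U ℝ).det = Real.log (schurComplInsert N U e) := by
  have hU := hN.det_submatrix_finset_pos U
  rw [det_submatrix_insert N he hU.ne'.isUnit, Real.log_mul hU.ne' (hN.schurComplInsert_pos he).ne']
  ring

end Real

end Matrix

theorem Ftil_eq_log_det_submatrix {E : ℕ} (K : Matrix (Fin E) (Fin E) ℝ) (lam : ℝ)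
    (U : Finset (Fin E)) :
    Ftil K lam U = Real.log ((1 + lam⁻¹ • K).submatrix (↑) (↑) : Matrix U U ℝ).det := by
  simp [Ftil, subK, submatrix_add, submatrix_smul, submatrix_one _ Subtype.val_injective]

/-- For a real symmetric positive semidefinite matrix `K` and `λ > 0`,
the set function `F̃(S) = log det(I + λ⁻¹ K_S)` is submodular: for all `S ⊆ T` and `e ∉ T`,
`F̃(S ∪ {e}) − F̃(S) ≥ F̃(T ∪ {e}) − F̃(T)`. -/
theorem Ftil_submodular {E : ℕ} (K : Matrix (Fin E) (Fin E) ℝ) (hK : K.PosSemidef)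
    (lam : ℝ) (hlam : 0 < lam) (S T : Finset (Fin E)) (hST : S ⊆ T)
    (e : Fin E) (he : e ∉ T) :
    Ftil K lam (insert e T) - Ftil K lam T ≤ Ftil K lam (insert e S) - Ftil K lam S := by
  have hN : (1 + lam⁻¹ • K).PosDef :=
    PosDef.one.add_posSemidef (hK.smul (inv_nonneg.mpr hlam.le))
  have heS : e ∉ S := fun h => he (hST h)
  simp only [Ftil_eq_log_det_submatrix, hN.log_det_submatrix_insert_sub he,
    hN.log_det_submatrix_insert_sub heS]
  exact Real.log_le_log (hN.schurComplInsert_pos he) (hN.schurComplInsert_le_of_subset hST e)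
end

section
/- Let K be an E-by-E real symmetric positive semidefinite matrix and λ > 0. For S ⊆ {1,...,E} let A_S = K_S + λ I. Then for all subsets S ⊆ T ⊆ {1,...,E} and every e ∉ T, the quadratic form K_{eT} A_T⁻¹ K_{Te} is at least K_{eS} A_S⁻¹ K_{Se}; equivalently, the Schur complement σ_e(T) = K_ee + λ − K_{eT} A_T⁻¹ K_{Te} satisfies σ_e(T) ≤ σ_e(S). -/
/-!
The quadratic form `b ↦ bᵀ A⁻¹ b` of a positive definite `A` is the maximum of
`2 zᵀ b - zᵀ A z` over all `z`. A test vector `z` for `A_S`, extended by zero to `T`, is a test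
vector for `A_T` with the same value, because `A_S` is the principal submatrix of `A_T` on `S`;
hence the maximum can only grow from `S` to `T`.
-/

open Matrix Finset

namespace Matrix

variable {m n : Type*} [Fintype m] [Fintype n] [DecidableEq m] [DecidableEq n]

theorem PosDef.two_mul_dotProduct_sub_dotProduct_mulVec_le {A : Matrix n n ℝ} (hA : A.PosDef)
    (b z : n → ℝ) : 2 * (z ⬝ᵥ b) - z ⬝ᵥ (A *ᵥ z) ≤ b ⬝ᵥ (A⁻¹ *ᵥ b) := by
  set c := A⁻¹ *ᵥ b
  have hAc : A *ᵥ c = b := by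
    rw [mulVec_mulVec, mul_nonsing_inv _ ((isUnit_iff_isUnit_det A).mp hA.isUnit), one_mulVec]
  have hcA : c ⬝ᵥ (A *ᵥ z) = b ⬝ᵥ z := by
    rw [dotProduct_mulVec, ← mulVec_transpose, (isHermitian_iff_isSymm.mp hA.isHermitian).eq, hAc]
  -- the gap is the `A`-norm of `z - A⁻¹ b`
  have hsq := hA.posSemidef.dotProduct_mulVec_nonneg (z - c)
  rw [star_trivial, mulVec_sub, sub_dotProduct, dotProduct_sub, dotProduct_sub, hAc, hcA,
    dotProduct_comm c b, dotProduct_comm b z] at hsq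
  linarith

theorem PosDef.dotProduct_inv_mulVec_congr_le {A : Matrix n n ℝ} (hA : A.PosDef)
    (P : Matrix m n ℝ) (b : n → ℝ) :
    (P *ᵥ b) ⬝ᵥ ((P * A * Pᵀ)⁻¹ *ᵥ (P *ᵥ b)) ≤ b ⬝ᵥ (A⁻¹ *ᵥ b) := by
  by_cases hB : IsUnit (P * A * Pᵀ).det
  · set c := (P * A * Pᵀ)⁻¹ *ᵥ (P *ᵥ b)
    have hBc : (P * A * Pᵀ) *ᵥ c = P *ᵥ b := by
      rw [mulVec_mulVec, mul_nonsing_inv _ hB, one_mulVec]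
    have key := hA.two_mul_dotProduct_sub_dotProduct_mulVec_le b (Pᵀ *ᵥ c)
    have hlin : (Pᵀ *ᵥ c) ⬝ᵥ b = c ⬝ᵥ (P *ᵥ b) := by
      rw [mulVec_transpose, ← dotProduct_mulVec]
    have hquad : (Pᵀ *ᵥ c) ⬝ᵥ (A *ᵥ (Pᵀ *ᵥ c)) = c ⬝ᵥ (P *ᵥ b) := by
      rw [mulVec_transpose, ← dotProduct_mulVec, mulVec_mulVec, ← mulVec_transpose,
        mulVec_mulVec, hBc]
    rw [hlin, hquad, dotProduct_comm] at key
    linarith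
  · -- a singular matrix has junk inverse `0`
    rw [nonsing_inv_apply_not_isUnit _ hB, zero_mulVec, dotProduct_zero]
    simpa using hA.inv.posSemidef.dotProduct_mulVec_nonneg b

theorem PosDef.dotProduct_inv_mulVec_submatrix_le {A : Matrix n n ℝ} (hA : A.PosDef)
    (f : m → n) (b : n → ℝ) :
    (b ∘ f) ⬝ᵥ ((A.submatrix f f)⁻¹ *ᵥ (b ∘ f)) ≤ b ⬝ᵥ (A⁻¹ *ᵥ b) := by
  have hP : (1 : Matrix n n ℝ).submatrix f id * A * ((1 : Matrix n n ℝ).submatrix f id)ᵀ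
      = A.submatrix f f := by
    ext i j; simp [mul_apply, one_apply]
  have hPb : (1 : Matrix n n ℝ).submatrix f id *ᵥ b = b ∘ f := by
    ext i; simp [mulVec, dotProduct, one_apply]
  have := hA.dotProduct_inv_mulVec_congr_le ((1 : Matrix n n ℝ).submatrix f id) b
  rwa [hP, hPb] at this

end Matrix

theorem subK_add_smul_one_posDef {E : ℕ} {K : Matrix (Fin E) (Fin E) ℝ} (hK : K.PosSemidef)
    {lam : ℝ} (hlam : 0 < lam) (S : Finset (Fin E)) : (subK K S + lam • 1).PosDef := by
  refine PosDef.posSemidef_add (hK.submatrix _) ?_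
  rw [smul_one_eq_diagonal]
  exact posDef_diagonal_iff.2 fun _ => hlam

theorem subK_add_smul_one_submatrix_of_subset {E : ℕ} (K : Matrix (Fin E) (Fin E) ℝ) (lam : ℝ)
    {S T : Finset (Fin E)} (hST : S ⊆ T) :
    (subK K T + lam • 1).submatrix (fun i : S => ⟨i, hST i.2⟩)
        (fun i : S => ⟨i, hST i.2⟩) =
      subK K S + lam • 1 := by
  ext i j
  simp only [submatrix_apply, Matrix.add_apply, Matrix.smul_apply, one_apply, Subtype.ext_iff]
  rfl

theorem schur_complement_antitone_general {E : ℕ} (K : Matrix (Fin E) (Fin E) ℝ) (hK : K.PosSemidef)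
    (lam : ℝ) (hlam : 0 < lam) (S T : Finset (Fin E)) (hST : S ⊆ T)
    (e : Fin E) :
    ((fun j : {x // x ∈ S} => K e j.1) ⬝ᵥ
        ((subK K S + lam • 1)⁻¹ *ᵥ fun j : {x // x ∈ S} => K e j.1) ≤
      (fun j : {x // x ∈ T} => K e j.1) ⬝ᵥ
        ((subK K T + lam • 1)⁻¹ *ᵥ fun j : {x // x ∈ T} => K e j.1)) ∧
      (K e e + lam -
          (fun j : {x // x ∈ T} => K e j.1) ⬝ᵥ
            ((subK K T + lam • 1)⁻¹ *ᵥ fun j : {x // x ∈ T} => K e j.1) ≤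
        K e e + lam -
          (fun j : {x // x ∈ S} => K e j.1) ⬝ᵥ
            ((subK K S + lam • 1)⁻¹ *ᵥ fun j : {x // x ∈ S} => K e j.1)) := by
  have hmono := (subK_add_smul_one_posDef hK hlam T).dotProduct_inv_mulVec_submatrix_le
    (fun i : S => ⟨i, hST i.2⟩) fun j => K e j.1
  rw [subK_add_smul_one_submatrix_of_subset K lam hST] at hmono
  exact ⟨hmono, sub_le_sub_left hmono _⟩

/-- For `K` real symmetric positive semidefinite, `λ > 0`, `A_S = K_S + λI`,
subsets `S ⊆ T` and `e ∉ T`, the quadratic form `K_{eT} A_T⁻¹ K_{Te}` is at least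
`K_{eS} A_S⁻¹ K_{Se}`; equivalently the Schur complements satisfy `σ_e(T) ≤ σ_e(S)`. -/
theorem schur_complement_antitone {E : ℕ} (K : Matrix (Fin E) (Fin E) ℝ) (hK : K.PosSemidef)
    (lam : ℝ) (hlam : 0 < lam) (S T : Finset (Fin E)) (hST : S ⊆ T)
    (e : Fin E) (he : e ∉ T) :
    ((fun j : {x // x ∈ S} => K e j.1) ⬝ᵥ
        ((subK K S + lam • 1)⁻¹ *ᵥ fun j : {x // x ∈ S} => K e j.1) ≤
      (fun j : {x // x ∈ T} => K e j.1) ⬝ᵥ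
        ((subK K T + lam • 1)⁻¹ *ᵥ fun j : {x // x ∈ T} => K e j.1)) ∧
      (K e e + lam -
          (fun j : {x // x ∈ T} => K e j.1) ⬝ᵥ
            ((subK K T + lam • 1)⁻¹ *ᵥ fun j : {x // x ∈ T} => K e j.1) ≤
        K e e + lam -
          (fun j : {x // x ∈ S} => K e j.1) ⬝ᵥ
            ((subK K S + lam • 1)⁻¹ *ᵥ fun j : {x // x ∈ S} => K e j.1)) :=
  schur_complement_antitone_general K hK lam hlam S T hST e
end

section
/- Let K be an E-by-E real symmetric positive semidefinite matrix with strictly positive diagonal entries, λ > 0, and fix K_card ≥ 1 with (K_card − 1)·μ < 1, where μ = max over i ≠ j of |K_ij| / √(K_ii K_jj) is the mutual coherence of K. Define F(S) = log det(K_S + λ I) and G(S) = Σ_{e∈S} log(K_ee + λ) for subsets S of size K_card, and let S_diag be any size-K_card subset maximizing G. Then F(S_diag) ≥ max over size-K_card subsets S of F(S), minus K_card · log((1 + (K_card − 1)μ) / (1 − (K_card − 1)μ)). -/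
/-! Write `A = K_S + λI` as `A = D⁻¹ C D⁻¹` with `D = diag (A i i)^(-1/2)`, so that
`F(S) = G(S) + log det C` for the correlation matrix `C`. Since `C` has unit diagonal and its
off-diagonal entries are at most `μ` in absolute value (adding `λ` to the diagonal only shrinks
them), Gershgorin's theorem puts every eigenvalue of `C` in `[1 - δ, 1 + δ]` with
`δ = (|S| - 1) μ`, whence `|S| log (1 - δ) ≤ F(S) - G(S) ≤ |S| log (1 + δ)`. Comparing `S` with
the maximiser `S_diag` of `G` costs at most the sum of the two gaps. -/

open Matrix Finset

/-- The mutual coherence `μ = max_{i ≠ j} |K_ij| / √(K_ii K_jj)`. -/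
noncomputable def mutualCoherence {E : ℕ} (K : Matrix (Fin E) (Fin E) ℝ) : ℝ :=
  sSup {x : ℝ | ∃ i j : Fin E, i ≠ j ∧ x = |K i j| / Real.sqrt (K i i * K j j)}

/-- `F(S) = log det (K_S + λ I)`. -/
noncomputable def Ffun {E : ℕ} (K : Matrix (Fin E) (Fin E) ℝ) (lam : ℝ)
    (S : Finset (Fin E)) : ℝ :=
  Real.log (subK K S + lam • 1).det

/-- `G(S) = Σ_{e ∈ S} log (K_ee + λ)`. -/
noncomputable def Gfun {E : ℕ} (K : Matrix (Fin E) (Fin E) ℝ) (lam : ℝ)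
    (S : Finset (Fin E)) : ℝ :=
  ∑ e ∈ S, Real.log (K e e + lam)

section MutualCoherence

variable {E : ℕ} (K : Matrix (Fin E) (Fin E) ℝ)

lemma mutualCoherence_nonneg : 0 ≤ mutualCoherence K :=
  Real.sSup_nonneg (by rintro x ⟨i, j, -, rfl⟩; positivity)

lemma bddAbove_coherences :
    BddAbove {x : ℝ | ∃ i j : Fin E, i ≠ j ∧ x = |K i j| / √(K i i * K j j)} :=
  ((Set.finite_range fun p : Fin E × Fin E => |K p.1 p.2| / √(K p.1 p.1 * K p.2 p.2)).subset
    (by rintro x ⟨i, j, -, rfl⟩; exact ⟨(i, j), rfl⟩)).bddAbove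

lemma abs_le_mutualCoherence_mul_sqrt {i j : Fin E} (hij : i ≠ j) (h : 0 < K i i * K j j) :
    |K i j| ≤ mutualCoherence K * √(K i i * K j j) :=
  (div_le_iff₀ (Real.sqrt_pos.mpr h)).mp (le_csSup (bddAbove_coherences K) ⟨i, j, hij, rfl⟩)

end MutualCoherence

namespace Matrix

variable {n : Type*} [Fintype n] [DecidableEq n]

noncomputable def correlation (A : Matrix n n ℝ) : Matrix n n ℝ :=
  diagonal (fun i => (√(A i i))⁻¹) * A * diagonal (fun i => (√(A i i))⁻¹)

lemma correlation_apply (A : Matrix n n ℝ) (i j : n) :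
    correlation A i j = A i j / (√(A i i) * √(A j j)) := by
  simp only [correlation, mul_diagonal, diagonal_mul]
  field_simp

lemma correlation_apply_self {A : Matrix n n ℝ} {i : n} (hi : 0 < A i i) :
    correlation A i i = 1 := by
  rw [correlation_apply, Real.mul_self_sqrt hi.le, div_self hi.ne']

lemma IsHermitian.correlation {A : Matrix n n ℝ} (hA : A.IsHermitian) :
    A.correlation.IsHermitian := by
  simpa [Matrix.correlation, diagonal_conjTranspose] using
    isHermitian_mul_mul_conjTranspose (diagonal fun i => (√(A i i))⁻¹) hA

lemma det_eq_prod_diag_mul_det_correlation {A : Matrix n n ℝ} (hA : ∀ i, 0 < A i i) :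
    A.det = (∏ i, A i i) * A.correlation.det := by
  have hD : (∏ i, A i i) * (∏ i, (√(A i i))⁻¹) ^ 2 = 1 := by
    rw [← prod_pow, ← prod_mul_distrib]
    exact prod_eq_one fun i _ => by
      rw [inv_pow, Real.sq_sqrt (hA i).le, mul_inv_cancel₀ (hA i).ne']
  rw [correlation, det_mul, det_mul, det_diagonal]
  linear_combination (-A.det) * hD

lemma IsHermitian.abs_eigenvalues_sub_le {M : Matrix n n ℝ} (hM : M.IsHermitian) {c r : ℝ}
    (hdiag : ∀ i, M i i = c) (hrow : ∀ i, ∑ j ∈ univ.erase i, |M i j| ≤ r) (k : n) :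
    |hM.eigenvalues k - c| ≤ r := by
  have hev : Module.End.HasEigenvalue (toLin' M) (hM.eigenvalues k) := by
    rw [Module.End.hasEigenvalue_iff_mem_spectrum, spectrum_toLin']
    exact hM.eigenvalues_mem_spectrum_real k
  obtain ⟨i, hi⟩ := eigenvalue_mem_ball hev
  rw [Metric.mem_closedBall, hdiag, Real.dist_eq] at hi
  exact hi.trans (hrow i)

lemma IsHermitian.det_mem_Icc {M : Matrix n n ℝ} (hM : M.IsHermitian) {δ : ℝ} (hδ : δ ≤ 1)
    (hdiag : ∀ i, M i i = 1) (hrow : ∀ i, ∑ j ∈ univ.erase i, |M i j| ≤ δ) :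
    M.det ∈ Set.Icc ((1 - δ) ^ Fintype.card n) ((1 + δ) ^ Fintype.card n) := by
  have hev i := abs_le.mp (hM.abs_eigenvalues_sub_le hdiag hrow i)
  rw [hM.det_eq_prod_eigenvalues]
  simp only [RCLike.ofReal_real_eq_id, id]
  constructor
  · simpa using prod_le_prod (s := univ) (fun _ _ => sub_nonneg.mpr hδ)
      (fun i _ => show 1 - δ ≤ hM.eigenvalues i by linarith [hev i])
  · simpa using prod_le_prod (s := univ) (fun i _ => by linarith [hev i])
      (fun i _ => show hM.eigenvalues i ≤ 1 + δ by linarith [hev i])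

end Matrix

section DiagonalProxy

variable {E : ℕ} {K : Matrix (Fin E) (Fin E) ℝ} {lam : ℝ}

lemma subK_add_smul_one_apply (S : Finset (Fin E)) (i j : S) :
    (subK K S + lam • 1) i j = K i j + if i = j then lam else 0 := by
  simp [subK, one_apply]

lemma subK_add_smul_one_apply_self (S : Finset (Fin E)) (i : S) :
    (subK K S + lam • 1) i i = K i i + lam := by
  rw [subK_add_smul_one_apply, if_pos rfl]

lemma abs_correlation_subK_add_smul_one_le (hdiag : ∀ e, 0 < K e e) (hlam : 0 ≤ lam)
    {S : Finset (Fin E)} {i j : S} (hij : i ≠ j) :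
    |(subK K S + lam • 1).correlation i j| ≤ mutualCoherence K := by
  have hi := hdiag i
  have hj := hdiag j
  have hd : 0 < √(K i i + lam) * √(K j j + lam) :=
    mul_pos (Real.sqrt_pos.mpr (by linarith)) (Real.sqrt_pos.mpr (by linarith))
  rw [correlation_apply, subK_add_smul_one_apply_self, subK_add_smul_one_apply_self,
    subK_add_smul_one_apply, if_neg hij, add_zero, abs_div, abs_of_pos hd, div_le_iff₀ hd]
  calc |K i j| ≤ mutualCoherence K * √(K i i * K j j) :=
        abs_le_mutualCoherence_mul_sqrt K (Subtype.coe_ne_coe.mpr hij) (mul_pos hi hj)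
    _ ≤ mutualCoherence K * (√(K i i + lam) * √(K j j + lam)) := by
        rw [Real.sqrt_mul hi.le]
        gcongr <;> linarith [mutualCoherence_nonneg K]

lemma sum_abs_correlation_subK_add_smul_one_le (hdiag : ∀ e, 0 < K e e) (hlam : 0 ≤ lam)
    (S : Finset (Fin E)) (i : S) :
    ∑ j ∈ univ.erase i, |(subK K S + lam • 1).correlation i j| ≤
      ((#S : ℝ) - 1) * mutualCoherence K := by
  refine (sum_le_card_nsmul _ _ _ fun j hj =>
    abs_correlation_subK_add_smul_one_le hdiag hlam (ne_of_mem_erase hj).symm).trans_eq ?_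
  rw [nsmul_eq_mul, cast_card_erase_of_mem (mem_univ i), card_univ, Fintype.card_coe]

lemma Ffun_sub_Gfun_mem_Icc (hK : K.IsHermitian) (hdiag : ∀ e, 0 < K e e) (hlam : 0 ≤ lam)
    (S : Finset (Fin E)) (hS : ((#S : ℝ) - 1) * mutualCoherence K < 1) :
    Ffun K lam S - Gfun K lam S ∈
      Set.Icc (#S * Real.log (1 - ((#S : ℝ) - 1) * mutualCoherence K))
        (#S * Real.log (1 + ((#S : ℝ) - 1) * mutualCoherence K)) := by
  set A := subK K S + lam • 1 with hAdef
  have hApos (i : S) : 0 < A i i := by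
    rw [hAdef, subK_add_smul_one_apply_self]
    linarith [hdiag i]
  have hA : A.IsHermitian := (hK.submatrix _).add (by simp [IsHermitian])
  have hC := hA.correlation.det_mem_Icc hS.le (fun i => correlation_apply_self (hApos i))
    (sum_abs_correlation_subK_add_smul_one_le hdiag hlam S)
  rw [Fintype.card_coe] at hC
  have hCpos : 0 < A.correlation.det := (pow_pos (by linarith) _).trans_le hC.1
  have hF : Ffun K lam S - Gfun K lam S = Real.log A.correlation.det := by
    rw [Ffun, det_eq_prod_diag_mul_det_correlation hApos,
      Real.log_mul (prod_pos fun i _ => hApos i).ne' hCpos.ne',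
      Real.log_prod fun i _ => (hApos i).ne', Gfun, ← sum_coe_sort S]
    simp only [hAdef, subK_add_smul_one_apply_self, add_sub_cancel_left]
  rw [hF, ← Real.log_pow, ← Real.log_pow]
  exact ⟨Real.log_le_log (pow_pos (by linarith) _) hC.1, Real.log_le_log hCpos hC.2⟩

end DiagonalProxy

/-- If `K` is a real symmetric positive semidefinite matrix with strictly
positive diagonal, `λ > 0`, `K_card ≥ 1`, `(K_card − 1)μ < 1` with `μ` the mutual coherence,
and `S_diag` is any size-`K_card` subset maximizing `G(S) = Σ_{e∈S} log(K_ee + λ)`, then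
`F(S_diag) ≥ max_{|S| = K_card} F(S) − K_card · log((1 + (K_card − 1)μ)/(1 − (K_card − 1)μ))`
where `F(S) = log det(K_S + λI)`. -/
theorem diag_proxy_near_optimal {E : ℕ} (K : Matrix (Fin E) (Fin E) ℝ) (hK : K.PosSemidef)
    (hdiag : ∀ e, 0 < K e e) (lam : ℝ) (hlam : 0 < lam)
    (Kcard : ℕ) (hKcard : 1 ≤ Kcard)
    (hmu : ((Kcard : ℝ) - 1) * mutualCoherence K < 1)
    (Sdiag : Finset (Fin E)) (hSd : Sdiag.card = Kcard)
    (hGmax : ∀ S : Finset (Fin E), S.card = Kcard → Gfun K lam S ≤ Gfun K lam Sdiag) :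
    ∀ S : Finset (Fin E), S.card = Kcard →
      Ffun K lam S -
          (Kcard : ℝ) *
            Real.log ((1 + ((Kcard : ℝ) - 1) * mutualCoherence K) /
              (1 - ((Kcard : ℝ) - 1) * mutualCoherence K)) ≤
        Ffun K lam Sdiag := by
  intro S hS
  have hbounds (T : Finset (Fin E)) (hT : #T = Kcard) := by
    have h := Ffun_sub_Gfun_mem_Icc hK.isHermitian hdiag hlam.le T (hT ▸ hmu)
    rw [hT] at h
    exact h
  have hδ : 0 ≤ ((Kcard : ℝ) - 1) * mutualCoherence K :=
    mul_nonneg (sub_nonneg.mpr (Nat.one_le_cast.mpr hKcard)) (mutualCoherence_nonneg K)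
  rw [Real.log_div (by linarith) (by linarith)]
  linarith [(hbounds S hS).2, (hbounds Sdiag hSd).1, hGmax S hS]
end

section
/- Let K and K̂ be E-by-E real symmetric matrices with K positive semidefinite, let λ > 0 and λ̂ ∈ ℝ, and let S be a subset of {1,...,E} of size m. Suppose every entry of K̂_S − K_S has absolute value at most ε and |λ̂ − λ| ≤ ε/m, and set Δ = (m + 1/m)·ε. If Δ < λ, then K̂_S + λ̂ I is positive definite and |log det(K̂_S + λ̂ I) − log det(K_S + λ I)| ≤ −m · log(1 − Δ/λ). -/
open Matrix Finset

/-!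
Write `A = K_S + λI` and `B = K̂_S + λ̂I = A + E`. Entrywise, `|xᵀ(K̂_S - K_S)x| ≤ ε (∑ |xᵢ|)² ≤ mε‖x‖²`,
so `-ΔI ≤ E ≤ ΔI` in the Loewner order, and `λI ≤ A` turns this into the multiplicative sandwich
`(1 - t)A ≤ B ≤ (1 + t)A` with `t = Δ/λ < 1`. The determinant is monotone on positive definite
matrices (conjugating by `A^{-1/2}` reduces this to `1 ≤ M ⇒ 1 ≤ det M`, read off the eigenvalues),
so `(1 - t)^m det A ≤ det B ≤ (1 + t)^m det A`, and `log(1 + t) ≤ -log(1 - t)` gives the bound.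
-/

open scoped MatrixOrder

lemma Real.abs_log_sub_log_le_neg_mul_log_one_sub {a b t : ℝ} {k : ℕ} (ha : 0 < a)
    (ht₀ : 0 ≤ t) (ht₁ : t < 1) (hlo : (1 - t) ^ k * a ≤ b) (hhi : b ≤ (1 + t) ^ k * a) :
    |Real.log b - Real.log a| ≤ -k * Real.log (1 - t) := by
  have hpos : 0 < 1 - t := by linarith
  have hlo' := Real.log_le_log (by positivity) hlo
  have hhi' := Real.log_le_log (lt_of_lt_of_le (by positivity) hlo) hhi
  rw [Real.log_mul (by positivity) ha.ne', Real.log_pow] at hlo' hhi'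
  have hsum : Real.log (1 + t) + Real.log (1 - t) ≤ 0 := by
    rw [← Real.log_mul (by linarith) hpos.ne']
    exact Real.log_nonpos (by nlinarith) (by nlinarith)
  have : (k : ℝ) * Real.log (1 + t) ≤ -k * Real.log (1 - t) := by
    nlinarith [Nat.cast_nonneg (α := ℝ) k]
  rw [abs_le]
  constructor <;> linarith

namespace Matrix

variable {n : Type*}

lemma smul_one_le_smul_one [DecidableEq n] {a b : ℝ} (h : a ≤ b) :
    a • (1 : Matrix n n ℝ) ≤ b • 1 := by
  rw [le_iff, ← sub_smul]
  exact PosSemidef.one.smul (sub_nonneg.mpr h)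

lemma PosDef.of_le {A B : Matrix n n ℝ} (hA : A.PosDef) (hAB : A ≤ B) : B.PosDef := by
  simpa using hA.add_posSemidef hAB

lemma one_le_det_of_one_le [Fintype n] [DecidableEq n] {M : Matrix n n ℝ} (hM : 1 ≤ M) :
    1 ≤ M.det := by
  have hH : M.IsHermitian := by simpa using hM.isHermitian.add isHermitian_one
  have hspec := (algebraMap_le_iff_le_spectrum (r := (1 : ℝ)) hH.isSelfAdjoint).mp
    (by simpa using hM)
  rw [hH.det_eq_prod_eigenvalues]
  exact one_le_prod fun i _ => by exact_mod_cast hspec _ (hH.eigenvalues_mem_spectrum_real i)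

lemma det_le_det_of_le [Fintype n] [DecidableEq n] {A B : Matrix n n ℝ} (hA : A.PosDef)
    (hAB : A ≤ B) : A.det ≤ B.det := by
  set R := CFC.sqrt A
  have hRR : R * R = A := CFC.sqrt_mul_sqrt_self A hA.posSemidef.nonneg
  have hR : IsUnit R.det := by
    refine isUnit_iff_ne_zero.mpr fun h0 => hA.det_pos.ne' ?_
    rw [← hRR, det_mul, h0, zero_mul]
  have hCAC : R⁻¹ * A * R⁻¹ = 1 := by
    rw [← hRR, mul_assoc, mul_assoc, mul_nonsing_inv R hR, mul_one, nonsing_inv_mul R hR]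
  have hdetA : (R⁻¹).det * A.det * (R⁻¹).det = 1 := by
    rw [← det_mul, ← det_mul, hCAC, det_one]
  have hdetB : 1 ≤ (R⁻¹).det * B.det * (R⁻¹).det := by
    rw [← det_mul, ← det_mul]
    refine one_le_det_of_one_le (hCAC ▸ IsSelfAdjoint.conjugate_le_conjugate hAB ?_)
    exact (CFC.sqrt_nonneg A).posSemidef.isHermitian.inv
  nlinarith [hA.det_pos]

lemma abs_dotProduct_mulVec_le [Fintype n] {M : Matrix n n ℝ} {ε : ℝ}
    (hM : ∀ i j, |M i j| ≤ ε) (x : n → ℝ) :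
    |x ⬝ᵥ M *ᵥ x| ≤ Fintype.card n * ε * (x ⬝ᵥ x) := by
  rcases isEmpty_or_nonempty n with hn | ⟨⟨i₀⟩⟩
  · simp [dotProduct]
  have hε : 0 ≤ ε := (abs_nonneg _).trans (hM i₀ i₀)
  have hCS : (∑ i, |x i|) ^ 2 ≤ Fintype.card n * (x ⬝ᵥ x) := by
    simpa [dotProduct, sq_abs, ← sq] using
      sq_sum_le_card_mul_sum_sq (s := univ) (f := fun i => |x i|)
  calc |x ⬝ᵥ M *ᵥ x| = |∑ i, ∑ j, x i * M i j * x j| := by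
        simp only [dotProduct, mulVec, mul_sum, mul_assoc]
    _ ≤ ∑ i, ∑ j, |x i| * ε * |x j| := by
        refine (abs_sum_le_sum_abs _ _).trans (sum_le_sum fun i _ => ?_)
        refine (abs_sum_le_sum_abs _ _).trans (sum_le_sum fun j _ => ?_)
        rw [abs_mul, abs_mul]
        gcongr
        exact hM i j
    _ = ε * (∑ i, |x i|) ^ 2 := by
        rw [sq, sum_mul_sum, mul_sum]
        exact sum_congr rfl fun i _ => by rw [mul_sum]; exact sum_congr rfl fun j _ => by ring
    _ ≤ ε * (Fintype.card n * (x ⬝ᵥ x)) := by gcongr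
    _ = Fintype.card n * ε * (x ⬝ᵥ x) := by ring

lemma le_card_mul_smul_one [Fintype n] [DecidableEq n] {M : Matrix n n ℝ} (hM : M.IsHermitian)
    {ε : ℝ} (hMε : ∀ i j, |M i j| ≤ ε) : M ≤ (Fintype.card n * ε) • 1 := by
  refine le_iff.mpr (PosSemidef.of_dotProduct_mulVec_nonneg
    ((isHermitian_one.smul (IsSelfAdjoint.all _)).sub hM) fun x => ?_)
  have := (abs_le.mp (abs_dotProduct_mulVec_le hMε x)).2
  simp only [star_trivial, sub_mulVec, smul_mulVec, one_mulVec, dotProduct_sub, dotProduct_smul,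
    smul_eq_mul]
  linarith

lemma add_smul_one_le_smul_one [Fintype n] [DecidableEq n] {M : Matrix n n ℝ}
    (hM : M.IsHermitian) {ε a c : ℝ} (hMε : ∀ i j, |M i j| ≤ ε) (ha : |a| ≤ c) :
    M + a • 1 ≤ (Fintype.card n * ε + c) • 1 := by
  rw [add_smul]
  exact add_le_add (le_card_mul_smul_one hM hMε) (smul_one_le_smul_one (le_of_abs_le ha))

theorem abs_log_det_add_sub_log_det_le [Fintype n] [DecidableEq n] {A E : Matrix n n ℝ}
    {l δ : ℝ} (hl : 0 < l) (hA : l • 1 ≤ A) (hE : E ≤ δ • 1) (hE' : -E ≤ δ • 1) (hδ : 0 ≤ δ)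
    (hδl : δ < l) :
    (A + E).PosDef ∧
      |Real.log (A + E).det - Real.log A.det| ≤ -Fintype.card n * Real.log (1 - δ / l) := by
  set t := δ / l
  have ht₀ : 0 ≤ t := by positivity
  have ht₁ : t < 1 := (div_lt_one hl).mpr hδl
  have hδA : δ • (1 : Matrix n n ℝ) ≤ t • A := by
    calc δ • (1 : Matrix n n ℝ) = t • l • 1 := by rw [smul_smul, div_mul_cancel₀ _ hl.ne']
      _ ≤ t • A := smul_le_smul_of_nonneg_left hA ht₀
  have hlo : (1 - t) • A ≤ A + E := by
    calc (1 - t) • A = A - t • A := by rw [sub_smul, one_smul]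
      _ ≤ A + -(δ • 1) := by rw [← sub_eq_add_neg]; exact sub_le_sub_left hδA A
      _ ≤ A + E := add_le_add_right (neg_le.mp hE') A
  have hhi : A + E ≤ (1 + t) • A := by
    calc A + E ≤ A + t • A := add_le_add_right (hE.trans hδA) A
      _ = (1 + t) • A := by rw [add_smul, one_smul]
  have hApd : A.PosDef := (PosDef.one.smul hl).of_le hA
  have hlopd : ((1 - t) • A).PosDef := hApd.smul (sub_pos.mpr ht₁)
  have hBpd : (A + E).PosDef := hlopd.of_le hlo
  refine ⟨hBpd, Real.abs_log_sub_log_le_neg_mul_log_one_sub hApd.det_pos ht₀ ht₁ ?_ ?_⟩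
  · simpa [det_smul] using det_le_det_of_le hlopd hlo
  · simpa [det_smul] using det_le_det_of_le hBpd hhi

end Matrix

/-- **log-determinant perturbation bound.**  Let `K, K̂` be real symmetric
`E×E` matrices with `K` positive semidefinite, `λ > 0`, `λ̂ ∈ ℝ`, and `S` a subset of size
`m`.  If every entry of `K̂_S − K_S` has absolute value at most `ε`, `|λ̂ − λ| ≤ ε/m`, and
`Δ = (m + 1/m)·ε < λ`, then `K̂_S + λ̂I` is positive definite and
`|log det(K̂_S + λ̂I) − log det(K_S + λI)| ≤ −m·log(1 − Δ/λ)`. -/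
theorem logdet_perturbation {E : ℕ} (K Kh : Matrix (Fin E) (Fin E) ℝ)
    (hK : K.PosSemidef) (hKh : Kh.IsSymm)
    (lam lamh eps : ℝ) (hlam : 0 < lam)
    (S : Finset (Fin E)) (m : ℕ) (hm : S.card = m)
    (hent : ∀ i ∈ S, ∀ j ∈ S, |Kh i j - K i j| ≤ eps)
    (hl : |lamh - lam| ≤ eps / (m : ℝ))
    (hDelta : ((m : ℝ) + 1 / (m : ℝ)) * eps < lam) :
    (subK Kh S + lamh • 1).PosDef ∧
      |Real.log (subK Kh S + lamh • 1).det - Real.log (subK K S + lam • 1).det| ≤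
        -(m : ℝ) * Real.log (1 - ((m : ℝ) + 1 / (m : ℝ)) * eps / lam) := by
  set Δ := ((m : ℝ) + 1 / (m : ℝ)) * eps
  have hcard : Fintype.card S = m := by simpa using hm
  have hΔ_eq : Δ = Fintype.card S * eps + eps / m := by simp only [Δ, hcard]; ring
  -- for `m = 0` Lean reads `Δ` as `(0 + 1 / 0) * eps = 0`
  have hΔ : 0 ≤ Δ := by
    have hε : 0 ≤ eps / m := (abs_nonneg _).trans hl
    rcases eq_or_ne (m : ℝ) 0 with h0 | h0
    · simp [Δ, h0]
    · have : Δ = ((m : ℝ) ^ 2 + 1) * (eps / m) := by simp only [Δ]; field_simp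
      rw [this]; positivity
  set M := subK Kh S - subK K S
  have hM : M.IsHermitian := (hKh.submatrix _).sub (hK.isHermitian.submatrix _)
  have hMε : ∀ i j, |M i j| ≤ eps := fun i j => hent _ i.2 _ j.2
  have hKS : lam • 1 ≤ subK K S + lam • 1 := by
    rw [le_iff, add_sub_cancel_right]; exact hK.submatrix _
  have hsplit : subK Kh S + lamh • 1 = subK K S + lam • 1 + (M + (lamh - lam) • 1) := by
    simp only [M, sub_smul]; abel
  have hneg : -(M + (lamh - lam) • 1) = -M + (lam - lamh) • 1 := by
    rw [neg_add, ← neg_smul, neg_sub lamh lam]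
  have hbound := abs_log_det_add_sub_log_det_le hlam hKS
    (hΔ_eq ▸ add_smul_one_le_smul_one hM hMε hl)
    (hneg ▸ hΔ_eq ▸ add_smul_one_le_smul_one hM.neg (by simpa using hMε) (by rwa [abs_sub_comm]))
    hΔ hDelta
  rwa [hcard, ← hsplit] at hbound
end

section
/- Let M, M̂, ρ, ρ̂, τ, σ_min, B_f satisfy: M_ii ≥ σ_min² > 0 and M_jj ≥ σ_min², |M_ij| ≤ B_f², |M̂_ii − M_ii| ≤ τ, |M̂_jj − M_jj| ≤ τ, |M̂_ij − M_ij| ≤ τ, and 0 < τ ≤ σ_min²/2, where ρ = M_ij/√(M_ii M_jj) and ρ̂ = M̂_ij/√(M̂_ii M̂_jj). Then M̂_ii, M̂_jj ≥ σ_min²/2 > 0 and |ρ̂ − ρ| ≤ C_oc · τ with C_oc = 2/σ_min² + 4 B_f²/σ_min⁴. -/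
/-!
Write `u x = (√x)⁻¹`, so that
`ρ̂ - ρ = (M̂_ij - M_ij) u(M̂_ii) u(M̂_jj) + M_ij (u(M̂_ii) u(M̂_jj) - u(M_ii) u(M_jj))`.
All four diagonal entries are at least `c = σ_min²/2`, where `u ≤ c^{-1/2}` and `u` is
`1/(2 c √c)`-Lipschitz; telescoping the product of the two `u`'s then bounds
`|ρ̂ - ρ|` by `τ/c + B_f² τ/c²`, which is the claimed constant.
-/

open Real

lemma inv_sqrt_le_inv_sqrt {c x : ℝ} (hc : 0 < c) (hx : c ≤ x) : (√x)⁻¹ ≤ (√c)⁻¹ :=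
  inv_anti₀ (sqrt_pos.mpr hc) (sqrt_le_sqrt hx)

lemma abs_inv_sqrt_sub_inv_sqrt_le {c x y : ℝ} (hc : 0 < c) (hx : c ≤ x) (hy : c ≤ y) :
    |(√x)⁻¹ - (√y)⁻¹| ≤ |x - y| / (2 * c * √c) := by
  obtain ⟨a, ha, rfl⟩ : ∃ a, √c ≤ a ∧ a ^ 2 = x := ⟨√x, sqrt_le_sqrt hx, sq_sqrt (by linarith)⟩
  obtain ⟨b, hb, rfl⟩ : ∃ b, √c ≤ b ∧ b ^ 2 = y := ⟨√y, sqrt_le_sqrt hy, sq_sqrt (by linarith)⟩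
  have hs : 0 < √c := sqrt_pos.mpr hc
  have ha0 : 0 < a := hs.trans_le ha
  have hb0 : 0 < b := hs.trans_le hb
  rw [sqrt_sq ha0.le, sqrt_sq hb0.le]
  have hden : 2 * c * √c ≤ a * b * (a + b) := by
    have hab : c ≤ a * b := by
      simpa only [mul_self_sqrt hc.le] using mul_le_mul ha hb hs.le ha0.le
    nlinarith
  have hpos : 0 < a * b * (a + b) := by positivity
  have hdiff : a⁻¹ - b⁻¹ = (b ^ 2 - a ^ 2) / (a * b * (a + b)) := by
    field_simp
    ring
  rw [hdiff, abs_div, abs_of_pos hpos, abs_sub_comm]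
  exact div_le_div_of_nonneg_left (abs_nonneg _) (by positivity) hden

lemma abs_inv_sqrt_mul_inv_sqrt_sub_le {c r x y : ℝ} (hc : 0 < c) (hr : c ≤ r) (hx : c ≤ x)
    (hy : c ≤ y) : |(√r)⁻¹ * ((√x)⁻¹ - (√y)⁻¹)| ≤ |x - y| / (2 * c ^ 2) :=
  calc |(√r)⁻¹ * ((√x)⁻¹ - (√y)⁻¹)|
      = (√r)⁻¹ * |(√x)⁻¹ - (√y)⁻¹| := by
        rw [abs_mul, abs_of_pos (inv_pos.mpr (sqrt_pos.mpr (hc.trans_le hr)))]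
    _ ≤ (√c)⁻¹ * (|x - y| / (2 * c * √c)) :=
        mul_le_mul (inv_sqrt_le_inv_sqrt hc hr) (abs_inv_sqrt_sub_inv_sqrt_le hc hx hy)
          (abs_nonneg _) (by positivity)
    _ = |x - y| / (2 * c ^ 2) := by
        field_simp
        rw [sq_sqrt hc.le]
        ring

lemma abs_inv_sqrt_mul_inv_sqrt_sub_inv_sqrt_mul_inv_sqrt_le {c x y x' y' : ℝ} (hc : 0 < c)
    (hx : c ≤ x) (hy : c ≤ y) (hx' : c ≤ x') (hy' : c ≤ y') :
    |(√x)⁻¹ * (√y)⁻¹ - (√x')⁻¹ * (√y')⁻¹| ≤ (|x - x'| + |y - y'|) / (2 * c ^ 2) :=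
  calc |(√x)⁻¹ * (√y)⁻¹ - (√x')⁻¹ * (√y')⁻¹|
      = |(√y)⁻¹ * ((√x)⁻¹ - (√x')⁻¹) + (√x')⁻¹ * ((√y)⁻¹ - (√y')⁻¹)| := by ring_nf
    _ ≤ |x - x'| / (2 * c ^ 2) + |y - y'| / (2 * c ^ 2) :=
        (abs_add_le _ _).trans (add_le_add (abs_inv_sqrt_mul_inv_sqrt_sub_le hc hy hx hx')
          (abs_inv_sqrt_mul_inv_sqrt_sub_le hc hx' hy hy'))
    _ = (|x - x'| + |y - y'|) / (2 * c ^ 2) := by ring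

lemma abs_div_sqrt_mul_sub_div_sqrt_mul_le {Mii Mjj Mij Nii Njj Nij c B τ : ℝ} (hc : 0 < c)
    (hMii : c ≤ Mii) (hMjj : c ≤ Mjj) (hNii : c ≤ Nii) (hNjj : c ≤ Njj) (hMij : |Mij| ≤ B)
    (eii : |Nii - Mii| ≤ τ) (ejj : |Njj - Mjj| ≤ τ) (eij : |Nij - Mij| ≤ τ) :
    |Nij / √(Nii * Njj) - Mij / √(Mii * Mjj)| ≤ (1 / c + B / c ^ 2) * τ := by
  have hτ : 0 ≤ τ := (abs_nonneg _).trans eij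
  have hu : (√Nii)⁻¹ * (√Njj)⁻¹ ≤ 1 / c := by
    calc (√Nii)⁻¹ * (√Njj)⁻¹ ≤ (√c)⁻¹ * (√c)⁻¹ :=
          mul_le_mul (inv_sqrt_le_inv_sqrt hc hNii) (inv_sqrt_le_inv_sqrt hc hNjj)
            (by positivity) (by positivity)
      _ = 1 / c := by rw [← mul_inv, mul_self_sqrt hc.le, one_div]
  have hprod := abs_inv_sqrt_mul_inv_sqrt_sub_inv_sqrt_mul_inv_sqrt_le hc hNii hNjj hMii hMjj
  rw [sqrt_mul (hc.le.trans hNii), sqrt_mul (hc.le.trans hMii)]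
  calc |Nij / (√Nii * √Njj) - Mij / (√Mii * √Mjj)|
      = |(Nij - Mij) * ((√Nii)⁻¹ * (√Njj)⁻¹)
          + Mij * ((√Nii)⁻¹ * (√Njj)⁻¹ - (√Mii)⁻¹ * (√Mjj)⁻¹)| := by ring_nf
    _ ≤ τ * (1 / c) + B * ((τ + τ) / (2 * c ^ 2)) := by
        refine (abs_add_le _ _).trans (add_le_add ?_ ?_) <;> rw [abs_mul]
        · rw [abs_of_nonneg (a := (√Nii)⁻¹ * (√Njj)⁻¹) (by positivity)]
          exact mul_le_mul eij hu (by positivity) hτ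
        · refine mul_le_mul hMij (hprod.trans ?_) (abs_nonneg _) ((abs_nonneg _).trans hMij)
          gcongr
    _ = (1 / c + B / c ^ 2) * τ := by ring

theorem cosine_stability_general (Mii Mjj Mij Nii Njj Nij τ σmin Bf : ℝ)
    (hσ : 0 < σmin ^ 2)
    (hii : σmin ^ 2 ≤ Mii) (hjj : σmin ^ 2 ≤ Mjj) (hij : |Mij| ≤ Bf ^ 2)
    (eii : |Nii - Mii| ≤ τ) (ejj : |Njj - Mjj| ≤ τ) (eij : |Nij - Mij| ≤ τ)
    (hτ : τ ≤ σmin ^ 2 / 2) :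
    σmin ^ 2 / 2 ≤ Nii ∧ σmin ^ 2 / 2 ≤ Njj ∧ 0 < σmin ^ 2 / 2 ∧
      |Nij / Real.sqrt (Nii * Njj) - Mij / Real.sqrt (Mii * Mjj)| ≤
        (2 / σmin ^ 2 + 4 * Bf ^ 2 / σmin ^ 4) * τ := by
  have hNii : σmin ^ 2 / 2 ≤ Nii := by linarith [(abs_le.mp eii).1]
  have hNjj : σmin ^ 2 / 2 ≤ Njj := by linarith [(abs_le.mp ejj).1]
  have hc : 0 < σmin ^ 2 / 2 := by positivity
  refine ⟨hNii, hNjj, hc, ?_⟩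
  have hbound := abs_div_sqrt_mul_sub_div_sqrt_mul_le hc (by linarith) (by linarith) hNii hNjj
    hij eii ejj eij
  convert hbound using 2
  field_simp
  ring

/-- **cosine-similarity stability.**  If `M_ii, M_jj ≥ σ_min² > 0`,
`|M_ij| ≤ B_f²`, the hatted quantities satisfy `|M̂_ii − M_ii| ≤ τ`, `|M̂_jj − M_jj| ≤ τ`,
`|M̂_ij − M_ij| ≤ τ` with `0 < τ ≤ σ_min²/2`, then `M̂_ii, M̂_jj ≥ σ_min²/2 > 0` and the
cosine similarities `ρ = M_ij/√(M_ii M_jj)`, `ρ̂ = M̂_ij/√(M̂_ii M̂_jj)` satisfy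
`|ρ̂ − ρ| ≤ C_oc·τ` with `C_oc = 2/σ_min² + 4B_f²/σ_min⁴`. -/
theorem cosine_stability (Mii Mjj Mij Nii Njj Nij τ σmin Bf : ℝ)
    (hσ : 0 < σmin ^ 2)
    (hii : σmin ^ 2 ≤ Mii) (hjj : σmin ^ 2 ≤ Mjj) (hij : |Mij| ≤ Bf ^ 2)
    (eii : |Nii - Mii| ≤ τ) (ejj : |Njj - Mjj| ≤ τ) (eij : |Nij - Mij| ≤ τ)
    (hτ0 : 0 < τ) (hτ : τ ≤ σmin ^ 2 / 2) :
    σmin ^ 2 / 2 ≤ Nii ∧ σmin ^ 2 / 2 ≤ Njj ∧ 0 < σmin ^ 2 / 2 ∧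
      |Nij / Real.sqrt (Nii * Njj) - Mij / Real.sqrt (Mii * Mjj)| ≤
        (2 / σmin ^ 2 + 4 * Bf ^ 2 / σmin ^ 4) * τ :=
  cosine_stability_general Mii Mjj Mij Nii Njj Nij τ σmin Bf hσ hii hjj hij eii ejj eij hτ
end

section
/- Let S be a finite set, d : S × S → ℝ a symmetric dissimilarity, and P* = {G*_1, ..., G*_G} a partition of S into G nonempty groups such that max over g and over i, j in G*_g of d(i, j) ≤ Δ_in < Δ_out ≤ min over g ≠ h, i ∈ G*_g, j ∈ G*_h of d(i, j). Then average-linkage agglomerative clustering — starting from the partition of S into singletons and repeatedly merging the pair of clusters C, C' minimizing d_avg(C, C') = (1/(|C||C'|)) Σ_{i∈C} Σ_{j∈C'} d(i, j), stopping when exactly G clusters remain — returns exactly the partition P* (up to relabeling of groups). -/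
/-!
Every cluster produced by average linkage stays inside a single true group. As long as more
clusters than groups remain, pigeonhole puts two clusters in one group; their average linkage
is at most `Δin`, while two clusters from different groups are at least `Δout > Δin` apart, so
the greedy choice always merges within a group. When `G` clusters remain they therefore refine
the `G` groups, which forces them to be the groups.
-/

open Finset

/-- Average-linkage distance between two clusters:
`d_avg(C, C') = (1/(|C||C'|)) Σ_{i∈C} Σ_{j∈C'} d(i, j)`. -/
noncomputable def davg {ι : Type*} (d : ι → ι → ℝ) (C C' : Finset ι) : ℝ :=
  (∑ i ∈ C, ∑ j ∈ C', d i j) / ((C.card : ℝ) * (C'.card : ℝ))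

lemma davg_le_of_forall_le {ι : Type*} (d : ι → ι → ℝ) {C C' : Finset ι}
    (hC : C.Nonempty) (hC' : C'.Nonempty) {a : ℝ}
    (h : ∀ i ∈ C, ∀ j ∈ C', d i j ≤ a) : davg d C C' ≤ a := by
  have hpos : (0 : ℝ) < #C * #C' := by positivity
  rw [davg, div_le_iff₀ hpos]
  calc ∑ i ∈ C, ∑ j ∈ C', d i j
      ≤ ∑ _i ∈ C, ∑ _j ∈ C', a := sum_le_sum fun i hi => sum_le_sum fun j hj => h i hi j hj
    _ = a * (#C * #C') := by simp only [sum_const, nsmul_eq_mul]; ring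

lemma le_davg_of_forall_le {ι : Type*} (d : ι → ι → ℝ) {C C' : Finset ι}
    (hC : C.Nonempty) (hC' : C'.Nonempty) {a : ℝ}
    (h : ∀ i ∈ C, ∀ j ∈ C', a ≤ d i j) : a ≤ davg d C C' := by
  have hpos : (0 : ℝ) < #C * #C' := by positivity
  rw [davg, le_div_iff₀ hpos]
  calc a * (#C * #C')
      = ∑ _i ∈ C, ∑ _j ∈ C', a := by simp only [sum_const, nsmul_eq_mul]; ring
    _ ≤ ∑ i ∈ C, ∑ j ∈ C', d i j := sum_le_sum fun i hi => sum_le_sum fun j hj => h i hi j hj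

namespace AverageLinkage

variable {ι : Type*}

structure IsPartition (Q : Finset (Finset ι)) : Prop where
  nonempty : ∀ C ∈ Q, C.Nonempty
  disjoint : ∀ C ∈ Q, ∀ C' ∈ Q, C ≠ C' → Disjoint C C'
  cover : ∀ i, ∃ C ∈ Q, i ∈ C

def Refines (Q P : Finset (Finset ι)) : Prop :=
  ∀ C ∈ Q, ∃ B ∈ P, C ⊆ B

section Merge

variable [DecidableEq ι]

def merge (Q : Finset (Finset ι)) (C C' : Finset ι) : Finset (Finset ι) :=
  insert (C ∪ C') ((Q.erase C).erase C')

def IsStep (d : ι → ι → ℝ) (Q Q' : Finset (Finset ι)) : Prop :=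
  ∃ C ∈ Q, ∃ C' ∈ Q, C ≠ C' ∧
    (∀ D ∈ Q, ∀ D' ∈ Q, D ≠ D' → davg d C C' ≤ davg d D D') ∧ Q' = merge Q C C'

variable {Q P : Finset (Finset ι)} {C C' : Finset ι}

lemma mem_merge {D : Finset ι} :
    D ∈ merge Q C C' ↔ D = C ∪ C' ∨ D ∈ Q ∧ D ≠ C ∧ D ≠ C' := by
  simp only [merge, mem_insert, mem_erase]
  tauto

lemma card_merge_lt (hC : C ∈ Q) (hC' : C' ∈ Q) (hne : C ≠ C') : #(merge Q C C') < #Q := by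
  have hC'e : C' ∈ Q.erase C := mem_erase.mpr ⟨hne.symm, hC'⟩
  have hcard := card_insert_le (C ∪ C') ((Q.erase C).erase C')
  rw [card_erase_of_mem hC'e, card_erase_of_mem hC] at hcard
  have : 2 ≤ #Q := one_lt_card.mpr ⟨C, hC, C', hC', hne⟩
  exact hcard.trans_lt (by omega)

lemma IsPartition.merge (hQ : IsPartition Q) (hC : C ∈ Q) (hC' : C' ∈ Q) :
    IsPartition (merge Q C C') where
  nonempty D hD := by
    rcases mem_merge.mp hD with rfl | ⟨hD, -⟩
    · exact (hQ.nonempty C hC).mono subset_union_left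
    · exact hQ.nonempty D hD
  disjoint D hD D' hD' hDD' := by
    have disjoint_union {E} (hE : E ∈ Q) (hEC : E ≠ C) (hEC' : E ≠ C') : Disjoint (C ∪ C') E :=
      disjoint_union_left.mpr ⟨hQ.disjoint C hC E hE hEC.symm, hQ.disjoint C' hC' E hE hEC'.symm⟩
    rcases mem_merge.mp hD with rfl | ⟨hD, hDC, hDC'⟩ <;>
      rcases mem_merge.mp hD' with rfl | ⟨hD', hD'C, hD'C'⟩
    · exact absurd rfl hDD'
    · exact disjoint_union hD' hD'C hD'C'
    · exact (disjoint_union hD hDC hDC').symm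
    · exact hQ.disjoint D hD D' hD' hDD'
  cover i := by
    obtain ⟨D, hD, hiD⟩ := hQ.cover i
    by_cases hDC : D = C
    · exact ⟨C ∪ C', mem_merge.mpr (.inl rfl), mem_union_left _ (hDC ▸ hiD)⟩
    by_cases hDC' : D = C'
    · exact ⟨C ∪ C', mem_merge.mpr (.inl rfl), mem_union_right _ (hDC' ▸ hiD)⟩
    exact ⟨D, mem_merge.mpr (.inr ⟨hD, hDC, hDC'⟩), hiD⟩

lemma Refines.merge (hQP : Refines Q P) {B : Finset ι} (hB : B ∈ P) (hCB : C ∪ C' ⊆ B) :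
    Refines (merge Q C C') P := by
  intro D hD
  rcases mem_merge.mp hD with rfl | ⟨hD, -⟩
  · exact ⟨B, hB, hCB⟩
  · exact hQP D hD

end Merge

lemma Refines.exists_ne_subset_of_card_lt {Q P : Finset (Finset ι)} (hQP : Refines Q P)
    (hcard : #P < #Q) : ∃ D ∈ Q, ∃ D' ∈ Q, D ≠ D' ∧ ∃ B ∈ P, D ⊆ B ∧ D' ⊆ B := by
  choose! f hfP hf using hQP
  obtain ⟨D, hD, D', hD', hne, hfeq⟩ := exists_ne_map_eq_of_card_lt_of_maps_to hcard hfP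
  exact ⟨D, hD, D', hD', hne, f D, hfP D hD, hf D hD, hfeq ▸ hf D' hD'⟩

lemma Refines.eq_of_card_le {Q P : Finset (Finset ι)} (hQ : IsPartition Q) (hP : IsPartition P)
    (hQP : Refines Q P) (hcard : #Q ≤ #P) : Q = P := by
  choose! f hfP hf using hQP
  have block_eq {i C B} (hC : C ∈ Q) (hB : B ∈ P) (hiC : i ∈ C) (hiB : i ∈ B) : f C = B := by
    by_contra hne
    exact disjoint_left.mp (hP.disjoint _ (hfP C hC) B hB hne) (hf C hC hiC) hiB
  have hsurj : Set.SurjOn f Q P := by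
    intro B hB
    obtain ⟨i, hiB⟩ := hP.nonempty B hB
    obtain ⟨C, hC, hiC⟩ := hQ.cover i
    exact ⟨C, hC, block_eq hC hB hiC hiB⟩
  have hinj : Set.InjOn f Q := injOn_of_surjOn_of_card_le f hfP hsurj hcard
  have hfix : ∀ C ∈ Q, f C = C := by
    intro C hC
    refine (hf C hC).antisymm' fun i hi => ?_
    obtain ⟨D, hD, hiD⟩ := hQ.cover i
    rwa [← hinj hD hC (block_eq hD (hfP C hC) hiD hi)]
  refine eq_of_subset_of_card_le (fun C hC => ?_) (card_le_card_of_surjOn f hsurj)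
  exact hfix C hC ▸ hfP C hC

section Step

variable [DecidableEq ι] {d : ι → ι → ℝ} {Q Q' P : Finset (Finset ι)}

lemma IsStep.card_lt (h : IsStep d Q Q') : #Q' < #Q := by
  obtain ⟨C, hC, C', hC', hne, -, rfl⟩ := h
  exact card_merge_lt hC hC' hne

lemma IsStep.isPartition (h : IsStep d Q Q') (hQ : IsPartition Q) : IsPartition Q' := by
  obtain ⟨C, hC, C', hC', -, -, rfl⟩ := h
  exact hQ.merge hC hC'

lemma IsStep.refines (h : IsStep d Q Q') (hQ : ∀ C ∈ Q, C.Nonempty) (hQP : Refines Q P)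
    (hcard : #P < #Q) {Δin Δout : ℝ} (hΔ : Δin < Δout)
    (hin : ∀ B ∈ P, ∀ i ∈ B, ∀ j ∈ B, d i j ≤ Δin)
    (hout : ∀ B ∈ P, ∀ B' ∈ P, B ≠ B' → ∀ i ∈ B, ∀ j ∈ B', Δout ≤ d i j) :
    Refines Q' P := by
  obtain ⟨C, hC, C', hC', -, hmin, rfl⟩ := h
  obtain ⟨B, hB, hCB⟩ := hQP C hC
  obtain ⟨B', hB', hC'B'⟩ := hQP C' hC'
  obtain rfl : B = B' := by
    by_contra hBB'
    obtain ⟨D, hD, D', hD', hDD', B'', hB'', hDB'', hD'B''⟩ :=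
      hQP.exists_ne_subset_of_card_lt hcard
    have hwithin : davg d D D' ≤ Δin := davg_le_of_forall_le d (hQ D hD) (hQ D' hD')
      fun i hi j hj => hin B'' hB'' i (hDB'' hi) j (hD'B'' hj)
    have hacross : Δout ≤ davg d C C' := le_davg_of_forall_le d (hQ C hC) (hQ C' hC')
      fun i hi j hj => hout B hB B' hB' hBB' i (hCB hi) j (hC'B' hj)
    linarith [hmin D hD D' hD' hDD']
  exact hQP.merge hB (union_subset hCB hC'B')

end Step

lemma isPartition_singletons [Fintype ι] [DecidableEq ι] :
    IsPartition (univ.image fun i : ι => ({i} : Finset ι)) where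
  nonempty := by simp
  disjoint := by simpa using fun _ _ => Ne.symm
  cover i := ⟨{i}, mem_image_of_mem _ (mem_univ i), mem_singleton_self i⟩

lemma refines_singletons [Fintype ι] [DecidableEq ι] {P : Finset (Finset ι)}
    (hP : ∀ i, ∃ B ∈ P, i ∈ B) : Refines (univ.image fun i : ι => ({i} : Finset ι)) P := by
  simpa [Refines] using hP

end AverageLinkage

open AverageLinkage

theorem average_linkage_exact_recovery_general {ι : Type*} [Fintype ι] [DecidableEq ι]
    (d : ι → ι → ℝ)
    (G : ℕ) (Pstar : Finset (Finset ι)) (hPcard : Pstar.card = G)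
    (hPne : ∀ C ∈ Pstar, C.Nonempty)
    (hPdisj : ∀ C ∈ Pstar, ∀ C' ∈ Pstar, C ≠ C' → Disjoint C C')
    (hPcover : ∀ i : ι, ∃ C ∈ Pstar, i ∈ C)
    (Δin Δout : ℝ) (hΔ : Δin < Δout)
    (hin : ∀ C ∈ Pstar, ∀ i ∈ C, ∀ j ∈ C, d i j ≤ Δin)
    (hout : ∀ C ∈ Pstar, ∀ C' ∈ Pstar, C ≠ C' → ∀ i ∈ C, ∀ j ∈ C', Δout ≤ d i j)
    (seq : ℕ → Finset (Finset ι))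
    (h0 : seq 0 = Finset.univ.image fun i : ι => ({i} : Finset ι))
    (N : ℕ)
    (hstep : ∀ n < N, ∃ C ∈ seq n, ∃ C' ∈ seq n, C ≠ C' ∧
      (∀ D ∈ seq n, ∀ D' ∈ seq n, D ≠ D' → davg d C C' ≤ davg d D D') ∧
      seq (n + 1) = insert (C ∪ C') (((seq n).erase C).erase C'))
    (hstop : (seq N).card = G) :
    seq N = Pstar := by
  have hstep : ∀ n < N, IsStep d (seq n) (seq (n + 1)) := hstep
  have hP : IsPartition Pstar := ⟨hPne, hPdisj, hPcover⟩
  have hcard : ∀ n < N, G < #(seq n) := by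
    have hanti : StrictAntiOn (fun n => #(seq n)) (Set.Iic N) :=
      strictAntiOn_Iic_of_succ_lt fun n hn => (hstep n hn).card_lt
    intro n hn
    exact hstop ▸ hanti (Set.mem_Iic.mpr hn.le) Set.self_mem_Iic hn
  have hinv : ∀ n ≤ N, IsPartition (seq n) ∧ Refines (seq n) Pstar := by
    intro n
    induction n with
    | zero => exact fun _ => h0 ▸ ⟨isPartition_singletons, refines_singletons hPcover⟩
    | succ n ih =>
      intro hn
      obtain ⟨hQ, hQP⟩ := ih (by omega)
      exact ⟨(hstep n hn).isPartition hQ,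
        (hstep n hn).refines hQ.nonempty hQP (hPcard ▸ hcard n hn) hΔ hin hout⟩
  obtain ⟨hQ, hQP⟩ := hinv N le_rfl
  exact hQP.eq_of_card_le hQ hP (by rw [hstop, hPcard])

/-- **exact recovery of average-linkage clustering.**
Let `S` be a finite set (here the fintype `ι`), `d` a symmetric dissimilarity, and `P*`
a partition of `S` into `G` nonempty groups with all within-group dissimilarities
`≤ Δ_in < Δ_out ≤` all between-group dissimilarities.  Then average-linkage agglomerative
clustering — starting from the partition into singletons and repeatedly merging a pair of
distinct clusters minimizing `d_avg`, stopping when exactly `G` clusters remain — returns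
exactly the partition `P*`. -/
theorem average_linkage_exact_recovery {ι : Type*} [Fintype ι] [DecidableEq ι]
    (d : ι → ι → ℝ) (hsym : ∀ i j, d i j = d j i)
    (G : ℕ) (Pstar : Finset (Finset ι)) (hPcard : Pstar.card = G)
    (hPne : ∀ C ∈ Pstar, C.Nonempty)
    (hPdisj : ∀ C ∈ Pstar, ∀ C' ∈ Pstar, C ≠ C' → Disjoint C C')
    (hPcover : ∀ i : ι, ∃ C ∈ Pstar, i ∈ C)
    (Δin Δout : ℝ) (hΔ : Δin < Δout)
    (hin : ∀ C ∈ Pstar, ∀ i ∈ C, ∀ j ∈ C, d i j ≤ Δin)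
    (hout : ∀ C ∈ Pstar, ∀ C' ∈ Pstar, C ≠ C' → ∀ i ∈ C, ∀ j ∈ C', Δout ≤ d i j)
    (seq : ℕ → Finset (Finset ι))
    (h0 : seq 0 = Finset.univ.image fun i : ι => ({i} : Finset ι))
    (N : ℕ)
    (hstep : ∀ n < N, ∃ C ∈ seq n, ∃ C' ∈ seq n, C ≠ C' ∧
      (∀ D ∈ seq n, ∀ D' ∈ seq n, D ≠ D' → davg d C C' ≤ davg d D D') ∧
      seq (n + 1) = insert (C ∪ C') (((seq n).erase C).erase C'))
    (hstop : (seq N).card = G) :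
    seq N = Pstar :=
  average_linkage_exact_recovery_general d G Pstar hPcard hPne hPdisj hPcover Δin Δout hΔ hin hout
    seq h0 N hstep hstop
end
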